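/- arXiv:1411.7963 — 6 statements merged into one kernel-verified Lean document; each statement's English description precedes it below -/
import Mathlib

section
/- For any natural number k, real numbers d_1, ..., d_k, and nonnegative real number d, there exists a unique real number t such that t + d_i ≥ 0 for all i and the product ∏_{i=1}^k (t + d_i) equals d. -/
/-!
Write `m` for the least of the `d i`. The admissible shifts are exactly the `t ≥ -m`, and on
that ray `t ↦ ∏ i, (t + d i)` is continuous and strictly increasing (a product of nonnegative
increasing factors which are all positive past its left end), vanishes at `t = -m` and is
unbounded. So it takes every value `c ≥ 0` exactly once.
-/

open Finset

section ShiftedProduct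

variable {ι : Type*} [Fintype ι] [Nonempty ι] (d : ι → ℝ)

theorem forall_nonneg_add_iff_neg_inf'_le (t : ℝ) :
    (∀ i, 0 ≤ t + d i) ↔ -univ.inf' univ_nonempty d ≤ t := by
  rw [neg_le, le_inf'_iff]
  simp only [mem_univ, true_implies]
  exact forall_congr' fun i => by constructor <;> intro h <;> linarith

theorem prod_neg_inf'_add_eq_zero : ∏ i, (-univ.inf' univ_nonempty d + d i) = 0 := by
  obtain ⟨i, -, hi⟩ := exists_mem_eq_inf' univ_nonempty d
  exact prod_eq_zero (mem_univ i) (by rw [hi, neg_add_cancel])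

theorem pow_card_le_prod_neg_inf'_add {s : ℝ} (hs : 0 ≤ s) :
    s ^ Fintype.card ι ≤ ∏ i, (-univ.inf' univ_nonempty d + s + d i) := by
  rw [← card_univ, ← prod_const]
  refine prod_le_prod (fun _ _ => hs) fun i _ => ?_
  have := inf'_le d (mem_univ i)
  linarith

theorem strictMonoOn_prod_add :
    StrictMonoOn (fun t => ∏ i, (t + d i)) {t | ∀ i, 0 ≤ t + d i} := by
  intro a ha b _ hab
  have hb : ∀ i ∈ univ, 0 < b + d i := fun i _ => by linarith [ha i]
  by_cases hpos : ∀ i, 0 < a + d i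
  · exact prod_lt_prod_of_nonempty (fun i _ => hpos i) (fun i _ => by linarith) univ_nonempty
  · obtain ⟨i, hi⟩ := not_forall.mp hpos
    have hfa : ∏ i, (a + d i) = 0 :=
      prod_eq_zero (mem_univ i) (le_antisymm (not_lt.mp hi) (ha i))
    dsimp only
    rw [hfa]
    exact prod_pos hb

theorem exists_neg_inf'_le_prod_add_eq {c : ℝ} (hc : 0 ≤ c) :
    ∃ t, -univ.inf' univ_nonempty d ≤ t ∧ ∏ i, (t + d i) = c := by
  set m := univ.inf' univ_nonempty d
  have hcont : Continuous fun t => ∏ i, (t + d i) := by fun_prop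
  have hupper : c ≤ ∏ i, (-m + max c 1 + d i) :=
    calc c ≤ max c 1 := le_max_left c 1
      _ ≤ max c 1 ^ Fintype.card ι := le_self_pow₀ (le_max_right c 1) Fintype.card_ne_zero
      _ ≤ _ := pow_card_le_prod_neg_inf'_add d (by positivity)
  obtain ⟨t, ht, hft⟩ :=
    intermediate_value_Icc (by linarith [le_max_right c 1] : -m ≤ -m + max c 1)
      hcont.continuousOn ⟨(prod_neg_inf'_add_eq_zero d).symm ▸ hc, hupper⟩
  exact ⟨t, ht.1, hft⟩

theorem existsUnique_prod_add_eq {c : ℝ} (hc : 0 ≤ c) :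
    ∃! t, (∀ i, 0 ≤ t + d i) ∧ ∏ i, (t + d i) = c := by
  obtain ⟨t, ht, hft⟩ := exists_neg_inf'_le_prod_add_eq d hc
  have ht' := (forall_nonneg_add_iff_neg_inf'_le d t).mpr ht
  exact ⟨t, ⟨ht', hft⟩, fun s ⟨hs, hfs⟩ =>
    (strictMonoOn_prod_add d).injOn hs ht' (hfs.trans hft.symm)⟩

end ShiftedProduct

/-- For any natural number `k ≥ 1`, real numbers `d 1, …, d k`, and nonnegative real
number `d`, there exists a unique real number `t` such that `t + d i ≥ 0` for all `i`
and `∏ i, (t + d i) = d`. -/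
theorem unique_shift_with_nonneg_factors_and_given_product
    (k : ℕ) (hk : 1 ≤ k) (d : Fin k → ℝ) (dd : ℝ) (hdd : 0 ≤ dd) :
    ∃! t : ℝ, (∀ i : Fin k, 0 ≤ t + d i) ∧ ∏ i : Fin k, (t + d i) = dd :=
  have : Nonempty (Fin k) := ⟨⟨0, hk⟩⟩
  existsUnique_prod_add_eq d hdd
end

section
/- Two vectors z = (z₁, z₂) and w = (w₁, w₂) in ℍ² (quaternionic column vectors) lie in the same orbit of the action of the group of unit quaternions acting by simultaneous right multiplication (h : (z₁, z₂) ↦ (z₁h⁻¹, z₂h⁻¹)) if and only if |z₁| = |w₁|, |z₂| = |w₂|, and z₁·conj(z₂) = w₁·conj(w₂). -/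
open scoped Quaternion

/-!
Right multiplication by a unit quaternion `u` preserves norms and, since `u * star u = 1`, the
hermitian product `z₁ * star z₂`. Conversely, if `z₁ ≠ 0` then `h = w₁⁻¹ * z₁` is a unit carrying
`z₁` to `w₁`, and it also carries `z₂` to `w₂` because `a⁻¹ = star a / ‖a‖²` turns the equality
of hermitian products into `z₂ * z₁⁻¹ = w₂ * w₁⁻¹`.
-/

namespace Quaternion

variable {u a b c d z z' w w' : ℍ[ℝ]}

theorem mul_star_eq_one_of_norm_eq_one (hu : ‖u‖ = 1) : u * star u = 1 := by
  rw [self_mul_star, normSq_eq_norm_mul_self, hu, mul_one, coe_one]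

theorem mul_inv_eq_mul_inv_of_mul_star_eq (hab : ‖a‖ = ‖b‖) (h : c * star a = d * star b) :
    c * a⁻¹ = d * b⁻¹ := by
  have hsq : normSq a = normSq b := by rw [normSq_eq_norm_mul_self, normSq_eq_norm_mul_self, hab]
  rw [inv_def, inv_def, mul_smul_comm, mul_smul_comm, h, hsq]

theorem mul_mul_star_mul_eq_of_norm_eq_one (hu : ‖u‖ = 1) :
    z * u * star (z' * u) = z * star z' := by
  rw [star_mul, mul_assoc, ← mul_assoc u, mul_star_eq_one_of_norm_eq_one hu, one_mul]

theorem exists_norm_eq_one_of_mul_star_eq (hz : z ≠ 0) (hn : ‖z‖ = ‖w‖)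
    (hs : z' * star z = w' * star w) :
    ∃ h : ℍ[ℝ], ‖h‖ = 1 ∧ w = z * h⁻¹ ∧ w' = z' * h⁻¹ := by
  have hw : w ≠ 0 := norm_ne_zero_iff.mp (hn ▸ norm_ne_zero_iff.mpr hz)
  have hinv : (w⁻¹ * z)⁻¹ = z⁻¹ * w := by rw [mul_inv_rev, inv_inv]
  refine ⟨w⁻¹ * z, ?_, ?_, ?_⟩
  · rw [norm_mul, norm_inv, ← hn, inv_mul_cancel₀ (norm_ne_zero_iff.mpr hz)]
  · rw [hinv, mul_inv_cancel_left₀ hz]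
  · rw [hinv, ← mul_assoc, mul_inv_eq_mul_inv_of_mul_star_eq hn hs, inv_mul_cancel_right₀ hw]

end Quaternion

open Quaternion in
/-- Two vectors `(z₁, z₂)` and `(w₁, w₂)` in `ℍ²` lie in the same orbit of the group
of unit quaternions acting by simultaneous right multiplication by `h⁻¹` if and only
if `|z₁| = |w₁|`, `|z₂| = |w₂|` and `z₁ • conj z₂ = w₁ • conj w₂`. -/
theorem same_orbit_iff_quaternion_pair
    (z₁ z₂ w₁ w₂ : ℍ[ℝ]) :
    (∃ h : ℍ[ℝ], ‖h‖ = 1 ∧ w₁ = z₁ * h⁻¹ ∧ w₂ = z₂ * h⁻¹) ↔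
      (‖z₁‖ = ‖w₁‖ ∧ ‖z₂‖ = ‖w₂‖ ∧ z₁ * star z₂ = w₁ * star w₂) := by
  constructor
  · rintro ⟨h, hh, rfl, rfl⟩
    have hinv : ‖h⁻¹‖ = 1 := by rw [norm_inv, hh, inv_one]
    exact ⟨by rw [norm_mul, hinv, mul_one], by rw [norm_mul, hinv, mul_one],
      (mul_mul_star_mul_eq_of_norm_eq_one hinv).symm⟩
  · rintro ⟨hn₁, hn₂, hs⟩
    by_cases hz₁ : z₁ = 0
    · by_cases hz₂ : z₂ = 0
      · subst hz₁ hz₂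
        rw [norm_zero, eq_comm, norm_eq_zero] at hn₁ hn₂
        exact ⟨1, by simp, by simp [hn₁], by simp [hn₂]⟩
      · obtain ⟨h, hh, e₂, e₁⟩ := exists_norm_eq_one_of_mul_star_eq hz₂ hn₂ hs
        exact ⟨h, hh, e₁, e₂⟩
    · exact exists_norm_eq_one_of_mul_star_eq hz₁ hn₁ (by simpa using congrArg star hs)
end

section
/- The map π' : ℍ² → ℝ ⊕ ℍ sending (z₁, z₂) to (|z₁|² − |z₂|², z₁·conj(z₂)) is surjective. -/
/-!
Write `q = ‖q‖ • u` with `‖u‖ = 1` and look for a preimage of `(a, q)` of the form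
`(x • u, y)` with `x y : ℝ`. Its image is `(x² - y², (x * y) • u)`, so it suffices that
`x² - y² = a` and `x * y = ‖q‖`, i.e. `(x + y i)² = a + 2‖q‖ i`: take a complex square root.
-/

open scoped Quaternion

theorem Real.exists_sq_sub_sq_eq_and_mul_eq (a c : ℝ) :
    ∃ x y : ℝ, x ^ 2 - y ^ 2 = a ∧ x * y = c := by
  obtain ⟨w, hw⟩ := IsAlgClosed.exists_pow_nat_eq (a + 2 * c * Complex.I : ℂ) two_pos
  refine ⟨w.re, w.im, ?_, ?_⟩
  · simpa [sq] using congrArg Complex.re hw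
  · have him := congrArg Complex.im hw
    simp only [sq, Complex.mul_im, Complex.add_im, Complex.ofReal_im, Complex.mul_re,
      Complex.re_ofNat, Complex.ofReal_re, Complex.im_ofNat, mul_zero, sub_zero, Complex.I_im,
      mul_one, zero_mul, add_zero, Complex.I_re, zero_add] at him
    linarith

theorem exists_norm_eq_one_and_eq_norm_smul {E : Type*} [NormedAddCommGroup E]
    [NormedSpace ℝ E] [Nontrivial E] (v : E) : ∃ u : E, ‖u‖ = 1 ∧ v = ‖v‖ • u := by
  by_cases hv : v = 0
  · obtain ⟨u, hu⟩ := exists_norm_eq E zero_le_one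
    exact ⟨u, hu, by simp [hv]⟩
  · exact ⟨‖v‖⁻¹ • v, norm_smul_inv_norm hv, by simp [smul_smul, hv]⟩

/-- The map `π' : ℍ² → ℝ × ℍ`, `(z₁, z₂) ↦ (|z₁|² − |z₂|², z₁ ⬝ conj z₂)`, is
surjective. -/
theorem surjective_quaternion_pair_invariants :
    Function.Surjective (fun z : ℍ[ℝ] × ℍ[ℝ] =>
      ((‖z.1‖ ^ 2 - ‖z.2‖ ^ 2 : ℝ), z.1 * star z.2) : ℍ[ℝ] × ℍ[ℝ] → ℝ × ℍ[ℝ]) := by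
  rintro ⟨a, q⟩
  obtain ⟨x, y, hxy, hprod⟩ := Real.exists_sq_sub_sq_eq_and_mul_eq a ‖q‖
  obtain ⟨u, hu, hq⟩ := exists_norm_eq_one_and_eq_norm_smul q
  refine ⟨(x • u, (y : ℍ[ℝ])), Prod.ext ?_ ?_⟩
  · show ‖x • u‖ ^ 2 - ‖(y : ℍ[ℝ])‖ ^ 2 = a
    simp only [norm_smul, hu, Real.norm_eq_abs, Quaternion.norm_coe, mul_one, sq_abs, hxy]
  · show x • u * star (y : ℍ[ℝ]) = q
    rw [Quaternion.star_coe, smul_mul_assoc, Quaternion.mul_coe_eq_smul, smul_smul, hprod, ← hq]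
end

section
/- Two pairs (z, z₀) and (w, w₀) in ℍ × ℍ₀ (where ℍ₀ is the purely imaginary quaternions) lie in the same orbit of the action of the unit quaternions (h : (z, z₀) ↦ (zh⁻¹, h z₀ h⁻¹)) if and only if |z| = |w|, |z₀| = |w₀|, and z·z₀·conj(z) = w·w₀·conj(w). -/
open scoped Quaternion

/-!
The three quantities are invariant because `h` is a unit quaternion. Conversely, since
`z z₀ z̄ = |z|² z z₀ z⁻¹`, for `z ≠ 0` the only candidate `h = w⁻¹ z` does conjugate `z₀`
to `w₀`. For `z = 0` one must conjugate a pure quaternion `p` to a pure `q` of the same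
norm: `r = p + q` satisfies `r p = q r` because `p² = -|p|² = q²`, and when `q = -p` any
nonzero pure `r ⟂ p` does.
-/

theorem exists_norm_eq_one_conj_eq_of_mul_eq_mul {A : Type*} [NormedDivisionRing A]
    [NormedAlgebra ℝ A] {p q r : A} (hr : r ≠ 0)
    (hrpq : r * p = q * r) : ∃ u : A, ‖u‖ = 1 ∧ q = u * p * u⁻¹ := by
  have hr' : ‖r‖ ≠ 0 := norm_ne_zero_iff.mpr hr
  refine ⟨‖r‖⁻¹ • r, by rw [norm_smul, norm_inv, norm_norm, inv_mul_cancel₀ hr'], ?_⟩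
  rw [smul_mul_assoc, hrpq, ← mul_smul_comm, mul_assoc,
    mul_inv_cancel₀ (smul_ne_zero (inv_ne_zero hr') hr), mul_one]

theorem eq_mul_mul_inv_of_mul_mul_inv_eq {G : Type*} [GroupWithZero G] {a b x y : G}
    (hb : b ≠ 0) (h : a * x * a⁻¹ = b * y * b⁻¹) : y = b⁻¹ * a * x * (b⁻¹ * a)⁻¹ := by
  calc y = b⁻¹ * (b * y * b⁻¹) * b := by simp [mul_assoc, hb]
    _ = b⁻¹ * a * x * (b⁻¹ * a)⁻¹ := by
      rw [← h, mul_inv_rev, inv_inv]; simp only [mul_assoc]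

namespace Quaternion

theorem normSq_eq_one_of_norm_eq_one {h : ℍ[ℝ]} (hh : ‖h‖ = 1) : normSq h = 1 := by
  rw [normSq_eq_norm_mul_self, hh, one_mul]

theorem mul_mul_star_eq_normSq_smul (a b : ℍ[ℝ]) :
    a * b * star a = normSq a • (a * b * a⁻¹) := by
  rcases eq_or_ne a 0 with rfl | ha
  · simp
  rw [inv_def, mul_smul_comm, smul_smul, mul_inv_cancel₀ (normSq_ne_zero.2 ha), one_smul]

theorem exists_ne_zero_mul_eq_neg_mul {p : ℍ[ℝ]} (hp : p.re = 0) :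
    ∃ r ≠ 0, r * p = -p * r := by
  by_cases hij : p.imI = 0 ∧ p.imJ = 0
  · refine ⟨(equivProd ℝ).symm (0, 1, 0, 0),
      fun h => by simpa using congrArg QuaternionAlgebra.imI h, ?_⟩
    ext <;> simp [hp, hij.1, hij.2]
  · refine ⟨(equivProd ℝ).symm (0, p.imJ, -p.imI, 0), fun h => hij ⟨?_, ?_⟩, ?_⟩
    · simpa using congrArg QuaternionAlgebra.imJ h
    · simpa using congrArg QuaternionAlgebra.imI h
    · ext <;> simp [hp] <;> ring

theorem exists_norm_eq_one_conj_eq_of_re_eq_zero {p q : ℍ[ℝ]} (hp : p.re = 0) (hq : q.re = 0)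
    (hpq : ‖p‖ = ‖q‖) : ∃ u : ℍ[ℝ], ‖u‖ = 1 ∧ q = u * p * u⁻¹ := by
  by_cases hsum : p + q = 0
  · rcases eq_or_ne p 0 with rfl | hp0
    · exact ⟨1, norm_one, by simpa using hsum⟩
    obtain ⟨r, hr, hrp⟩ := exists_ne_zero_mul_eq_neg_mul hp
    exact exists_norm_eq_one_conj_eq_of_mul_eq_mul hr (by rwa [eq_neg_of_add_eq_zero_right hsum])
  · refine exists_norm_eq_one_conj_eq_of_mul_eq_mul hsum ?_
    have hnormSq : normSq p = normSq q := by simp only [normSq_eq_norm_mul_self, hpq]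
    have hsq : p * p = q * q := by
      rw [← sq, ← sq, sq_eq_neg_normSq.2 hp, sq_eq_neg_normSq.2 hq, hnormSq]
    rw [add_mul, mul_add, hsq, add_comm]

end Quaternion

open Quaternion in
/-- Two pairs `(z, z₀)` and `(w, w₀)` in `ℍ × ℍ₀` (with `ℍ₀` the purely imaginary
quaternions) lie in the same orbit of the unit quaternions acting by
`h : (z, z₀) ↦ (z h⁻¹, h z₀ h⁻¹)` iff `|z| = |w|`, `|z₀| = |w₀|` and
`z z₀ conj z = w w₀ conj w`. -/
theorem same_orbit_iff_quaternion_mixed_pair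
    (z w z₀ w₀ : ℍ[ℝ]) (hz₀ : z₀.re = 0) (hw₀ : w₀.re = 0) :
    (∃ h : ℍ[ℝ], ‖h‖ = 1 ∧ w = z * h⁻¹ ∧ w₀ = h * z₀ * h⁻¹) ↔
      (‖z‖ = ‖w‖ ∧ ‖z₀‖ = ‖w₀‖ ∧ z * z₀ * star z = w * w₀ * star w) := by
  constructor
  · rintro ⟨h, hh, rfl, rfl⟩
    have hh0 : h ≠ 0 := norm_ne_zero_iff.mp (by rw [hh]; exact one_ne_zero)
    refine ⟨by simp [hh], by simp [hh], ?_⟩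
    rw [mul_mul_star_eq_normSq_smul, mul_mul_star_eq_normSq_smul]
    simp [mul_assoc, hh0, normSq_eq_one_of_norm_eq_one hh]
  · rintro ⟨hzw, hzw₀, hstar⟩
    rcases eq_or_ne z 0 with rfl | hz
    · obtain ⟨h, hh, hconj⟩ := exists_norm_eq_one_conj_eq_of_re_eq_zero hz₀ hw₀ hzw₀
      exact ⟨h, hh, by simpa using hzw.symm, hconj⟩
    have hw : w ≠ 0 := norm_ne_zero_iff.mp (hzw ▸ norm_ne_zero_iff.mpr hz)
    have hnormSq : normSq z = normSq w := by simp only [normSq_eq_norm_mul_self, hzw]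
    rw [mul_mul_star_eq_normSq_smul, mul_mul_star_eq_normSq_smul, hnormSq] at hstar
    refine ⟨w⁻¹ * z, by simp [hzw, hw], by simp [hz],
      eq_mul_mul_inv_of_mul_mul_inv_eq hw (smul_right_injective _ (normSq_ne_zero.2 hw) hstar)⟩
end

section
/- The map π' : ℍ × ℍ₀ → ℝ ⊕ ℍ₀ sending (z, z₀) to (|z|² − |z₀|², z·z₀·conj(z)) is surjective, where ℍ₀ is the space of purely imaginary quaternions. -/
/-!
Take `z` real, `z = √s` with `s > 0`, and `z₀ = s⁻¹ q`. Then `z z₀ conj z = q` and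
`|z|² − |z₀|² = s − |q|²/s²`, so it suffices that the cubic `s² (s − r) = |q|²` has a positive
root, which the intermediate value theorem provides when `q ≠ 0`. When `q = 0`, one of `z`, `z₀`
vanishes and the other is chosen of the right norm.
-/

open scoped Quaternion

namespace Quaternion

theorem exists_re_eq_zero_norm_sq_eq {a : ℝ} (ha : 0 ≤ a) :
    ∃ x : ℍ[ℝ], x.re = 0 ∧ ‖x‖ ^ 2 = a := by
  refine ⟨((√a * Complex.I : ℂ) : ℍ[ℝ]), by simp, ?_⟩
  rw [sq, ← normSq_eq_norm_mul_self, normSq_def']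
  simp [Real.sq_sqrt ha]

theorem norm_coe_sqrt_sq {s : ℝ} (hs : 0 ≤ s) : ‖((√s : ℝ) : ℍ[ℝ])‖ ^ 2 = s := by
  rw [norm_coe, Real.norm_eq_abs, sq_abs, Real.sq_sqrt hs]

theorem coe_mul_mul_star_coe (t : ℝ) (x : ℍ[ℝ]) :
    (t : ℍ[ℝ]) * x * star (t : ℍ[ℝ]) = t ^ 2 • x := by
  rw [star_coe, coe_mul_eq_smul, smul_mul_assoc, mul_coe_eq_smul, smul_smul, sq]

end Quaternion

theorem exists_pos_sq_mul_sub_eq (r : ℝ) {c : ℝ} (hc : 0 < c) :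
    ∃ s > 0, s ^ 2 * (s - r) = c := by
  set f : ℝ → ℝ := fun s => s ^ 2 * (s - r)
  set b := |r| + c + 1
  have hb : 1 ≤ b := by linarith [abs_nonneg r]
  have hfb : c ≤ f b := calc
    c ≤ 1 * (b - r) := by linarith [le_abs_self r]
    _ ≤ b ^ 2 * (b - r) :=
      mul_le_mul_of_nonneg_right (one_le_pow₀ hb) (by linarith [le_abs_self r])
  obtain ⟨s, hs, hfs⟩ := intermediate_value_Icc (by linarith : (0 : ℝ) ≤ b)
    (by fun_prop : ContinuousOn f (Set.Icc 0 b)) ⟨by simp [f, hc.le], hfb⟩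
  refine ⟨s, hs.1.lt_of_ne ?_, hfs⟩
  rintro rfl
  exact hc.ne (by simpa [f] using hfs)

/-- The map `π' : ℍ × ℍ₀ → ℝ × ℍ₀`, `(z, z₀) ↦ (|z|² − |z₀|², z z₀ conj z)`, is
surjective: every pair `(r, q)` with `q` purely imaginary is attained. -/
theorem surjective_quaternion_mixed_pair_invariants
    (r : ℝ) (q : ℍ[ℝ]) (hq : q.re = 0) :
    ∃ z z₀ : ℍ[ℝ], z₀.re = 0 ∧ ‖z‖ ^ 2 - ‖z₀‖ ^ 2 = r ∧ z * z₀ * star z = q := by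
  rcases eq_or_ne q 0 with rfl | hq0
  · rcases le_or_gt 0 r with hr | hr
    · exact ⟨(√r : ℝ), 0, rfl, by rw [Quaternion.norm_coe_sqrt_sq hr, norm_zero]; ring, by simp⟩
    · obtain ⟨x, hx, hxn⟩ := Quaternion.exists_re_eq_zero_norm_sq_eq (neg_nonneg.2 hr.le)
      exact ⟨0, x, hx, by simp [hxn], by simp⟩
  · obtain ⟨s, hs, hsc⟩ := exists_pos_sq_mul_sub_eq r (by positivity : 0 < ‖q‖ ^ 2)
    refine ⟨(√s : ℝ), s⁻¹ • q, by simp [hq], ?_, ?_⟩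
    · rw [Quaternion.norm_coe_sqrt_sq hs.le, norm_smul, mul_pow, norm_inv,
        Real.norm_of_nonneg hs.le, ← hsc]
      field_simp
      ring
    · rw [Quaternion.coe_mul_mul_star_coe, Real.sq_sqrt hs.le, smul_smul,
        mul_inv_cancel₀ hs.ne', one_smul]
end

section
/- The image of the map ρ : (S²)³ → ℝ³ sending (v₁, v₂, v₃) to (⟨v₂,v₃⟩, ⟨v₃,v₁⟩, ⟨v₁,v₂⟩) equals the set D = {x ∈ ℝ³ : A(x) is positive semidefinite}, where A(x) is the symmetric matrix with unit diagonal and off-diagonal entries x₁, x₂, x₃. -/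
/-!
`A(ρ(v₁, v₂, v₃))` is the Gram matrix of `v₁, v₂, v₃`, hence positive semidefinite. Conversely a
positive semidefinite matrix has a square root, so it is `Bᴴ * B` for some `B`, i.e. the Gram matrix
of the columns of `B`; a unit diagonal says exactly that these columns are unit vectors.
-/

open scoped RealInnerProductSpace ComplexOrder

namespace Matrix

variable {𝕜 n : Type*} [RCLike 𝕜] [Fintype n]

theorem gram_cols_eq_conjTranspose_mul_self (B : Matrix n n 𝕜) :
    gram 𝕜 (fun j ↦ WithLp.toLp 2 (B · j)) = Bᴴ * B := by
  rw [gram_eq_conjTranspose_mul (EuclideanSpace.basisFun n 𝕜)]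
  rfl

theorem PosSemidef.exists_gram_eq {M : Matrix n n 𝕜} (hM : M.PosSemidef) :
    ∃ v : n → EuclideanSpace 𝕜 n, gram 𝕜 v = M := by
  classical
  open MatrixOrder in
  obtain ⟨B, rfl⟩ := CStarAlgebra.nonneg_iff_eq_star_mul_self.mp hM.nonneg
  exact ⟨_, gram_cols_eq_conjTranspose_mul_self B⟩

end Matrix

def unitDiagMatrix (x : ℝ × ℝ × ℝ) : Matrix (Fin 3) (Fin 3) ℝ :=
  !![1, x.2.2, x.2.1; x.2.2, 1, x.1; x.2.1, x.1, 1]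

theorem gram_eq_unitDiagMatrix_iff {E : Type*} [NormedAddCommGroup E] [InnerProductSpace ℝ E]
    {u : Fin 3 → E} {x : ℝ × ℝ × ℝ} :
    Matrix.gram ℝ u = unitDiagMatrix x ↔
      (∀ i, ‖u i‖ = 1) ∧ (⟪u 1, u 2⟫, ⟪u 2, u 0⟫, ⟪u 0, u 1⟫) = x := by
  have hnorm (i : Fin 3) : ‖u i‖ ≠ -1 := by linarith [norm_nonneg (u i)]
  rcases x with ⟨a, b, c⟩
  simp [← Matrix.ext_iff, Fin.forall_fin_succ, unitDiagMatrix, hnorm, real_inner_comm (u 0),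
    real_inner_comm (u 1) (u 2)]
  tauto

/-- The image of `ρ : (S²)³ → ℝ³`, `(v₁,v₂,v₃) ↦ (⟪v₂,v₃⟫, ⟪v₃,v₁⟫, ⟪v₁,v₂⟫)` equals
the set `D = {x : A(x) positive semidefinite}`, where `A(x)` is the symmetric matrix
with unit diagonal and off-diagonal entries `x₁, x₂, x₃`. -/
theorem range_gram_map_eq_posSemidef_set :
    (Set.range fun p :
        ({v : EuclideanSpace ℝ (Fin 3) // ‖v‖ = 1} ×
         {v : EuclideanSpace ℝ (Fin 3) // ‖v‖ = 1} ×
         {v : EuclideanSpace ℝ (Fin 3) // ‖v‖ = 1}) =>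
      ((⟪p.2.1.val, p.2.2.val⟫ : ℝ), (⟪p.2.2.val, p.1.val⟫ : ℝ),
        (⟪p.1.val, p.2.1.val⟫ : ℝ)))
      = {x : ℝ × ℝ × ℝ |
          (!![1, x.2.2, x.2.1; x.2.2, 1, x.1; x.2.1, x.1, 1] :
            Matrix (Fin 3) (Fin 3) ℝ).PosSemidef} := by
  ext x
  change _ ↔ (unitDiagMatrix x).PosSemidef
  constructor
  · rintro ⟨⟨v₁, v₂, v₃⟩, rfl⟩
    have hgram : Matrix.gram ℝ ![v₁.val, v₂.val, v₃.val] = unitDiagMatrix _ :=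
      gram_eq_unitDiagMatrix_iff.mpr
        ⟨by simp [Fin.forall_fin_succ, v₁.prop, v₂.prop, v₃.prop], rfl⟩
    exact hgram ▸ Matrix.posSemidef_gram ℝ _
  · intro hx
    obtain ⟨u, hu⟩ := hx.exists_gram_eq
    obtain ⟨hunit, rfl⟩ := gram_eq_unitDiagMatrix_iff.mp hu
    exact ⟨(⟨u 0, hunit 0⟩, ⟨u 1, hunit 1⟩, ⟨u 2, hunit 2⟩), rfl⟩
end
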